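/- arXiv:2201.11677 — 6 statements merged into one kernel-verified Lean document; each statement's English description precedes it below -/
import Mathlib

section
/- Let Z be an n×n real positive definite matrix, ζ ∈ ℝⁿ a vector, and suppose the (n+1)×(n+1) block matrix Z[ζ] = [[Z, ζ],[ζᵀ, 1]] is positive definite. Let w = Z⁻¹1 where 1 is the all-ones vector, and define Mag(M) = 1ᵀM⁻¹1 for an invertible matrix M. Then Mag(Z[ζ]) = Mag(Z) + (1 - ζᵀw)² / (1 - ζᵀZ⁻¹ζ). -/
open Matrix

/-- Magnitude of an invertible matrix: the sum of the entries of its inverse. -/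
noncomputable def Mag {m : Type*} [Fintype m] [DecidableEq m]
    (M : Matrix m m ℝ) : ℝ := ∑ i, ∑ j, M⁻¹ i j

/-- The bordered matrix `Z[ζ] = [[Z, ζ], [ζᵀ, 1]]`. -/
noncomputable def border {n : ℕ} (Z : Matrix (Fin n) (Fin n) ℝ) (ζ : Fin n → ℝ) :
    Matrix (Fin n ⊕ Unit) (Fin n ⊕ Unit) ℝ :=
  Matrix.fromBlocks Z (Matrix.of fun i _ => ζ i) (Matrix.of fun _ j => ζ j)
    (Matrix.of fun _ _ => (1 : ℝ))

theorem stmt0 {n : ℕ} (Z : Matrix (Fin n) (Fin n) ℝ) (ζ : Fin n → ℝ)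
    (hZ : Z.PosDef) (hB : (border Z ζ).PosDef) :
    Mag (border Z ζ) =
      Mag Z + (1 - ζ ⬝ᵥ (Z⁻¹ *ᵥ fun _ => 1)) ^ 2 / (1 - ζ ⬝ᵥ (Z⁻¹ *ᵥ ζ)) := by
  classical
  set B : Matrix (Fin n) Unit ℝ := Matrix.of fun i _ => ζ i with hBdef
  set C : Matrix Unit (Fin n) ℝ := Matrix.of fun _ j => ζ j with hCdef
  set D : Matrix Unit Unit ℝ := Matrix.of fun _ _ => (1:ℝ) with hDdef
  letI iZ : Invertible Z := hZ.isUnit.invertible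
  letI iB : Invertible (border Z ζ) := hB.isUnit.invertible
  letI iBB : Invertible (fromBlocks Z B C D) := iB
  letI iS : Invertible (D - C * ⅟Z * B) := invertibleOfFromBlocks₁₁Invertible Z B C D
  set s : ℝ := 1 - ζ ⬝ᵥ (Z⁻¹ *ᵥ ζ) with hsdef
  have hZinv : ⅟Z = Z⁻¹ := invOf_eq_nonsing_inv Z
  have hsym : ∀ i j, Z⁻¹ i j = Z⁻¹ j i := by
    intro i j
    have h := hZ.isHermitian.inv
    rw [Matrix.IsHermitian] at h
    conv_lhs => rw [← h]
    simp [conjTranspose_apply]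
  have hSent : ∀ (a b : Unit), (D - C * ⅟Z * B) a b = s := by
    intro a b
    simp only [hZinv, Matrix.sub_apply, Matrix.mul_apply, hDdef, hCdef, hBdef, Matrix.of_apply,
      hsdef, dotProduct, mulVec]
    congr 1
    simp only [Finset.sum_mul, Finset.mul_sum]
    rw [Finset.sum_comm]
    exact Finset.sum_congr rfl fun x _ => Finset.sum_congr rfl fun y _ => by ring
  have hs : s ≠ 0 := by
    have hu : IsUnit (D - C * ⅟Z * B).det :=
      (Matrix.isUnit_iff_isUnit_det _).1 (isUnit_of_invertible _)
    rw [det_unique, hSent] at hu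
    exact hu.ne_zero
  have hSmat : D - C * ⅟Z * B = Matrix.of fun _ _ => s := by
    ext a b; exact hSent a b
  have hSinv : ∀ (a b : Unit), (⅟(D - C * ⅟Z * B)) a b = s⁻¹ := by
    intro a b
    rw [invOf_eq_nonsing_inv, hSmat, inv_subsingleton]
    simp [Matrix.diagonal, Ring.inverse_eq_inv]
  have hinv : (border Z ζ)⁻¹ = fromBlocks
      (⅟Z + ⅟Z * B * ⅟(D - C * ⅟Z * B) * C * ⅟Z) (-(⅟Z * B * ⅟(D - C * ⅟Z * B)))
      (-(⅟(D - C * ⅟Z * B) * C * ⅟Z)) (⅟(D - C * ⅟Z * B)) := by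
    rw [← invOf_eq_nonsing_inv]
    exact invOf_fromBlocks₁₁_eq Z B C D
  set t : ℝ := ζ ⬝ᵥ (Z⁻¹ *ᵥ fun _ => 1) with htdef
  have ht1 : ∑ i, ∑ k, Z⁻¹ i k * ζ k = t := by
    rw [htdef, dotProduct]
    simp only [mulVec, dotProduct, mul_one]
    rw [Finset.sum_comm]
    congr 1; ext k
    rw [Finset.mul_sum]
    congr 1; ext i
    rw [hsym i k]; ring
  have ht2 : ∑ j, ∑ k, ζ k * Z⁻¹ k j = t := by
    rw [htdef, dotProduct, Finset.sum_comm]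
    simp [mulVec, dotProduct, Finset.mul_sum]
  have hM : ∀ i j, (⅟Z * B * ⅟(D - C * ⅟Z * B) * C * ⅟Z) i j
      = s⁻¹ * ((∑ k, Z⁻¹ i k * ζ k) * (∑ k, ζ k * Z⁻¹ k j)) := by
    intro i j
    simp only [Matrix.mul_apply, Fintype.sum_unique, hSinv, hZinv, hBdef, hCdef, Matrix.of_apply,
      Finset.sum_mul, Finset.mul_sum]
    exact Finset.sum_congr rfl fun x _ => Finset.sum_congr rfl fun y _ => by ring
  have hBS : ∀ i (u : Unit), (⅟Z * B * ⅟(D - C * ⅟Z * B)) i u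
      = (∑ k, Z⁻¹ i k * ζ k) * s⁻¹ := by
    intro i u
    simp only [Matrix.mul_apply, Fintype.sum_unique, hSinv, hZinv, hBdef, Matrix.of_apply,
      Finset.sum_mul]
  have hSC : ∀ (u : Unit) j, (⅟(D - C * ⅟Z * B) * C * ⅟Z) u j
      = s⁻¹ * ∑ k, ζ k * Z⁻¹ k j := by
    intro u j
    simp only [Matrix.mul_apply, Fintype.sum_unique, hSinv, hZinv, hCdef, Matrix.of_apply,
      Finset.mul_sum]
    exact Finset.sum_congr rfl fun x _ => by ring
  rw [Mag, hinv, Fintype.sum_sum_type]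
  have e1 : ∑ i : Fin n, ∑ x : Fin n ⊕ Unit,
      (fromBlocks (⅟Z + ⅟Z * B * ⅟(D - C * ⅟Z * B) * C * ⅟Z) (-(⅟Z * B * ⅟(D - C * ⅟Z * B)))
      (-(⅟(D - C * ⅟Z * B) * C * ⅟Z)) (⅟(D - C * ⅟Z * B))) (Sum.inl i) x
      = Mag Z + s⁻¹ * (t * t) - t * s⁻¹ := by
    simp only [Fintype.sum_sum_type, fromBlocks_apply₁₁, fromBlocks_apply₁₂,
      Matrix.add_apply, Matrix.neg_apply, Finset.sum_add_distrib, hM, hBS,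
      Fintype.sum_unique, Finset.sum_neg_distrib]
    have h2 : ∑ x : Fin n, ∑ y : Fin n,
        s⁻¹ * ((∑ k, Z⁻¹ x k * ζ k) * ∑ k, ζ k * Z⁻¹ k y) = s⁻¹ * (t * t) := by
      calc ∑ x : Fin n, ∑ y : Fin n, s⁻¹ * ((∑ k, Z⁻¹ x k * ζ k) * ∑ k, ζ k * Z⁻¹ k y)
          = s⁻¹ * ((∑ x : Fin n, ∑ k, Z⁻¹ x k * ζ k) * ∑ y : Fin n, ∑ k, ζ k * Z⁻¹ k y) := by
            rw [Finset.sum_mul_sum, Finset.mul_sum]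
            exact Finset.sum_congr rfl fun x _ => by rw [Finset.mul_sum]
        _ = s⁻¹ * (t * t) := by rw [ht1, ht2]
    have h3 : ∑ x : Fin n, (∑ k, Z⁻¹ x k * ζ k) * s⁻¹ = t * s⁻¹ := by
      rw [← Finset.sum_mul, ht1]
    rw [h2, h3, Mag]
    simp only [hZinv]
    ring
  have e2 : ∑ a₂ : Unit, ∑ x : Fin n ⊕ Unit,
      (fromBlocks (⅟Z + ⅟Z * B * ⅟(D - C * ⅟Z * B) * C * ⅟Z) (-(⅟Z * B * ⅟(D - C * ⅟Z * B)))
      (-(⅟(D - C * ⅟Z * B) * C * ⅟Z)) (⅟(D - C * ⅟Z * B))) (Sum.inr a₂) x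
      = -(s⁻¹ * t) + s⁻¹ := by
    simp only [Fintype.sum_unique, Fintype.sum_sum_type, fromBlocks_apply₂₁, fromBlocks_apply₂₂,
      Matrix.neg_apply, hSC, hSinv, Finset.sum_neg_distrib]
    rw [← Finset.mul_sum, ht2]
  rw [e1, e2]
  field_simp
  ring
end

section
/- Let Z be an n×n positive definite real matrix and ζ ∈ ℝⁿ such that the block matrix Z[ζ] = [[Z, ζ],[ζᵀ, 1]] is positive definite. Let w = Z⁻¹1 be the weighting of Z. Then the weighting w[ζ] := Z[ζ]⁻¹1 of Z[ζ] is given by w[ζ] = (w, 0)ᵀ + ((1 - ζᵀw)/(1 - ζᵀZ⁻¹ζ)) · (−Z⁻¹ζ, 1)ᵀ. -/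
/-! The weighting of `Z[ζ]` is found by guessing it and checking `Z[ζ] v = 1`. The guess is
`(w, 0) + c (-Z⁻¹ζ, 1)`: since `Z[ζ] (-Z⁻¹ζ, 1) = (0, d)` with `d = 1 - ζᵀZ⁻¹ζ`, the first block
of `Z[ζ] v` is already `1`, and the last entry `ζᵀw + c d` equals `1` for `c = (1 - ζᵀw) / d`.
The Schur complement `d` is positive, being the value of the quadratic form of `Z[ζ]` at
`(-Z⁻¹ζ, 1)`. -/

open Matrix

lemma border_mulVec {n : ℕ} (Z : Matrix (Fin n) (Fin n) ℝ) (ζ : Fin n → ℝ)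
    (a : Fin n → ℝ) (b : Unit → ℝ) :
    border Z ζ *ᵥ Sum.elim a b =
      Sum.elim (Z *ᵥ a + b () • ζ) (fun _ => ζ ⬝ᵥ a + b ()) := by
  rw [border, fromBlocks_mulVec]
  ext (i | i) <;> simp [mulVec, dotProduct, mul_comm]

lemma mulVec_inv_mulVec {ι : Type*} [Fintype ι] [DecidableEq ι] {K : Type*} [Field K]
    {A : Matrix ι ι K} (hA : IsUnit A.det) (v : ι → K) : A *ᵥ (A⁻¹ *ᵥ v) = v := by
  rw [mulVec_mulVec, mul_nonsing_inv _ hA, one_mulVec]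

lemma inv_mulVec_eq_of_mulVec_eq {ι : Type*} [Fintype ι] [DecidableEq ι] {K : Type*} [Field K]
    {A : Matrix ι ι K} (hA : IsUnit A.det) {u v : ι → K} (h : A *ᵥ v = u) : A⁻¹ *ᵥ u = v := by
  rw [← h, mulVec_mulVec, nonsing_inv_mul _ hA, one_mulVec]

section Border

variable {n : ℕ} {Z : Matrix (Fin n) (Fin n) ℝ} {ζ : Fin n → ℝ}

lemma border_mulVec_neg_inv_mulVec (hZ : IsUnit Z.det) :
    border Z ζ *ᵥ Sum.elim (-(Z⁻¹ *ᵥ ζ)) (fun _ => 1) =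
      Sum.elim (fun _ => 0) (fun _ => 1 - ζ ⬝ᵥ (Z⁻¹ *ᵥ ζ)) := by
  rw [border_mulVec]
  ext (i | i)
  · simp [mulVec_neg, mulVec_inv_mulVec hZ]
  · simp only [Sum.elim_inr, dotProduct_neg]
    ring

lemma one_sub_dotProduct_inv_mulVec_pos (hZ : IsUnit Z.det) (hB : (border Z ζ).PosDef) :
    0 < 1 - ζ ⬝ᵥ (Z⁻¹ *ᵥ ζ) := by
  have hx : Sum.elim (-(Z⁻¹ *ᵥ ζ)) (fun _ : Unit => (1 : ℝ)) ≠ 0 :=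
    fun h => by simpa using congrFun h (Sum.inr ())
  simpa [border_mulVec_neg_inv_mulVec hZ, dotProduct] using hB.dotProduct_mulVec_pos hx

end Border

theorem stmt1 {n : ℕ} (Z : Matrix (Fin n) (Fin n) ℝ) (ζ : Fin n → ℝ)
    (hZ : Z.PosDef) (hB : (border Z ζ).PosDef)
    (w : Fin n → ℝ) (hw : w = Z⁻¹ *ᵥ fun _ => 1) :
    (border Z ζ)⁻¹ *ᵥ (fun _ => 1) =
      Sum.elim w (fun _ => 0) +
        ((1 - ζ ⬝ᵥ w) / (1 - ζ ⬝ᵥ (Z⁻¹ *ᵥ ζ))) •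
          Sum.elim (-(Z⁻¹ *ᵥ ζ)) (fun _ => 1) := by
  have hZdet : IsUnit Z.det := hZ.det_pos.ne'.isUnit
  have hd := one_sub_dotProduct_inv_mulVec_pos hZdet hB
  apply inv_mulVec_eq_of_mulVec_eq hB.det_pos.ne'.isUnit
  rw [mulVec_add, mulVec_smul, border_mulVec_neg_inv_mulVec hZdet, border_mulVec, hw,
    mulVec_inv_mulVec hZdet]
  ext (i | i)
  · simp
  · simp only [Pi.add_apply, Pi.smul_apply, Sum.elim_inr, smul_eq_mul]
    field_simp
    ring
end

section
/- Let d be an invertible n×n real matrix such that 1ᵀd⁻¹1 ≠ 0. For t > 0 small let w(t) solve exp[−td] w(t) = 1, where exp[−td] is the entrywise exponential. Then w(t) has a well-defined limit as t ↓ 0, namely lim_{t↓0} w(t) = d⁻¹1 / (1ᵀd⁻¹1). -/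
/-!
Entrywise, `exp[-t d] = 1 1ᵀ + t N(t)` with `N(t) = (exp[-t d] - 1 1ᵀ) / t → -d`. For this
rank-one update, the matrix determinant lemma and the Sherman–Morrison formula give
invertibility and `(t N + 1 1ᵀ)⁻¹ 1 = (t + 1ᵀ N⁻¹ 1)⁻¹ N⁻¹ 1` whenever `t + 1ᵀ N⁻¹ 1 ≠ 0`.
The right-hand side is continuous in `(t, N)` near `(0, -d)` because `1ᵀ d⁻¹ 1 ≠ 0`, and the
sign of `-d` cancels in the limit.
-/

open Matrix Filter Topology

namespace Matrix

section CommRing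
variable {R m : Type*} [CommRing R] [Fintype m] [DecidableEq m]

theorem det_add_vecMulVec {A : Matrix m m R} (hA : IsUnit A.det) (u v : m → R) :
    (A + vecMulVec u v).det = A.det * (1 + v ⬝ᵥ A⁻¹ *ᵥ u) := by
  rw [vecMulVec_eq Unit, det_add_replicateCol_mul_replicateRow hA, det_unique (n := Unit),
    Matrix.mul_assoc, ← replicateCol_mulVec]
  rfl

end CommRing

section Field
variable {K m : Type*} [Field K] [Fintype m] [DecidableEq m]

theorem inv_add_vecMulVec_mulVec {A : Matrix m m K} (hA : IsUnit A.det) {u v : m → K}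
    (h : 1 + v ⬝ᵥ A⁻¹ *ᵥ u ≠ 0) :
    (A + vecMulVec u v)⁻¹ *ᵥ u = (1 + v ⬝ᵥ A⁻¹ *ᵥ u)⁻¹ • A⁻¹ *ᵥ u := by
  set w := (1 + v ⬝ᵥ A⁻¹ *ᵥ u)⁻¹ • A⁻¹ *ᵥ u
  have hdet : IsUnit (A + vecMulVec u v).det := by
    rw [det_add_vecMulVec hA]
    exact hA.mul h.isUnit
  have hw : (A + vecMulVec u v) *ᵥ w = u := by
    rw [mulVec_smul, add_mulVec, mulVec_mulVec, mul_nonsing_inv _ hA, one_mulVec,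
      vecMulVec_mulVec, op_smul_eq_smul]
    match_scalars
    field_simp
  calc (A + vecMulVec u v)⁻¹ *ᵥ u = ((A + vecMulVec u v)⁻¹ * (A + vecMulVec u v)) *ᵥ w := by
        rw [← mulVec_mulVec, hw]
    _ = w := by rw [nonsing_inv_mul _ hdet, one_mulVec]

theorem isUnit_det_smul {N : Matrix m m K} (hN : IsUnit N.det) {t : K} (ht : t ≠ 0) :
    IsUnit (t • N).det := by
  rw [det_smul]
  exact (ht.isUnit.pow _).mul hN

theorem inv_smul_of_ne_zero {N : Matrix m m K} (hN : IsUnit N.det) {t : K} (ht : t ≠ 0) :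
    (t • N)⁻¹ = t⁻¹ • N⁻¹ :=
  inv_eq_left_inv <| by rw [smul_mul_smul_comm, inv_mul_cancel₀ ht, nonsing_inv_mul _ hN, one_smul]

theorem one_add_dotProduct_smul_inv_mulVec {N : Matrix m m K} (hN : IsUnit N.det) {t : K}
    (ht : t ≠ 0) (u v : m → K) :
    1 + v ⬝ᵥ (t • N)⁻¹ *ᵥ u = t⁻¹ * (t + v ⬝ᵥ N⁻¹ *ᵥ u) := by
  rw [inv_smul_of_ne_zero hN ht, smul_mulVec, dotProduct_smul, smul_eq_mul]
  field_simp

theorem isUnit_det_smul_add_vecMulVec {N : Matrix m m K} (hN : IsUnit N.det) {t : K}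
    (ht : t ≠ 0) {u v : m → K} (h : t + v ⬝ᵥ N⁻¹ *ᵥ u ≠ 0) :
    IsUnit (t • N + vecMulVec u v).det := by
  rw [det_add_vecMulVec (isUnit_det_smul hN ht), one_add_dotProduct_smul_inv_mulVec hN ht]
  exact (isUnit_det_smul hN ht).mul (mul_ne_zero (inv_ne_zero ht) h).isUnit

theorem smul_add_vecMulVec_inv_mulVec {N : Matrix m m K} (hN : IsUnit N.det) {t : K}
    (ht : t ≠ 0) {u v : m → K} (h : t + v ⬝ᵥ N⁻¹ *ᵥ u ≠ 0) :
    (t • N + vecMulVec u v)⁻¹ *ᵥ u = (t + v ⬝ᵥ N⁻¹ *ᵥ u)⁻¹ • N⁻¹ *ᵥ u := by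
  have hc := one_add_dotProduct_smul_inv_mulVec hN ht u v
  rw [inv_add_vecMulVec_mulVec (isUnit_det_smul hN ht) (hc ▸ mul_ne_zero (inv_ne_zero ht) h),
    hc, inv_smul_of_ne_zero hN ht, smul_mulVec, smul_smul]
  congr 1
  field_simp

end Field

section Limit
variable {𝕜 m : Type*} [NormedField 𝕜] [Fintype m] [DecidableEq m]

theorem tendsto_inv_of_isUnit_det {α : Type*} {l : Filter α} {N : α → Matrix m m 𝕜}
    {N₀ : Matrix m m 𝕜} (hN : Tendsto N l (𝓝 N₀)) (hN₀ : IsUnit N₀.det) :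
    Tendsto (fun x => (N x)⁻¹) l (𝓝 N₀⁻¹) := by
  refine (continuousAt_matrix_inv N₀ ?_).tendsto.comp hN
  rw [Ring.inverse_eq_inv']
  exact continuousAt_inv₀ hN₀.ne_zero

variable {N : 𝕜 → Matrix m m 𝕜} {N₀ : Matrix m m 𝕜}

theorem tendsto_add_dotProduct_inv_mulVec (hN : Tendsto N (𝓝[≠] 0) (𝓝 N₀))
    (hN₀ : IsUnit N₀.det) (u v : m → 𝕜) :
    Tendsto (fun t => t + v ⬝ᵥ (N t)⁻¹ *ᵥ u) (𝓝[≠] 0) (𝓝 (v ⬝ᵥ N₀⁻¹ *ᵥ u)) := by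
  have hcont : Continuous fun M : Matrix m m 𝕜 => v ⬝ᵥ M *ᵥ u :=
    continuous_const.dotProduct (continuous_id.matrix_mulVec continuous_const)
  simpa using (tendsto_nhdsWithin_of_tendsto_nhds tendsto_id).add
    ((hcont.tendsto _).comp (tendsto_inv_of_isUnit_det hN hN₀))

theorem eventually_smul_add_vecMulVec (hN : Tendsto N (𝓝[≠] 0) (𝓝 N₀)) (hN₀ : IsUnit N₀.det)
    {u v : m → 𝕜} (h : v ⬝ᵥ N₀⁻¹ *ᵥ u ≠ 0) :
    ∀ᶠ t in 𝓝[≠] 0, IsUnit (t • N t + vecMulVec u v).det ∧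
      (t • N t + vecMulVec u v)⁻¹ *ᵥ u = (t + v ⬝ᵥ (N t)⁻¹ *ᵥ u)⁻¹ • (N t)⁻¹ *ᵥ u := by
  have hdet : Tendsto (fun t => (N t).det) (𝓝[≠] 0) (𝓝 N₀.det) :=
    (continuous_id.matrix_det.tendsto N₀).comp hN
  have hc := tendsto_add_dotProduct_inv_mulVec hN hN₀ u v
  filter_upwards [self_mem_nhdsWithin, hdet.eventually_ne hN₀.ne_zero, hc.eventually_ne h]
    with t (ht : t ≠ 0) hNt hct
  exact ⟨isUnit_det_smul_add_vecMulVec hNt.isUnit ht hct,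
    smul_add_vecMulVec_inv_mulVec hNt.isUnit ht hct⟩

theorem tendsto_smul_add_vecMulVec_inv_mulVec (hN : Tendsto N (𝓝[≠] 0) (𝓝 N₀))
    (hN₀ : IsUnit N₀.det) {u v : m → 𝕜} (h : v ⬝ᵥ N₀⁻¹ *ᵥ u ≠ 0) :
    Tendsto (fun t => (t • N t + vecMulVec u v)⁻¹ *ᵥ u) (𝓝[≠] 0)
      (𝓝 ((v ⬝ᵥ N₀⁻¹ *ᵥ u)⁻¹ • N₀⁻¹ *ᵥ u)) := by
  have hlim : Tendsto (fun t => (t + v ⬝ᵥ (N t)⁻¹ *ᵥ u)⁻¹ • (N t)⁻¹ *ᵥ u) (𝓝[≠] 0)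
      (𝓝 ((v ⬝ᵥ N₀⁻¹ *ᵥ u)⁻¹ • N₀⁻¹ *ᵥ u)) :=
    ((tendsto_add_dotProduct_inv_mulVec hN hN₀ u v).inv₀ h).smul
      (((continuous_id.matrix_mulVec continuous_const).tendsto _).comp
        (tendsto_inv_of_isUnit_det hN hN₀))
  refine hlim.congr' ?_
  filter_upwards [eventually_smul_add_vecMulVec hN hN₀ h] with t ht
  exact ht.2.symm

end Limit
end Matrix

section ExpSlope
variable {m n : Type*}

noncomputable def expDiffQuotient (d : Matrix m n ℝ) (t : ℝ) : Matrix m n ℝ :=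
  of fun j k => (Real.exp (-t * d j k) - 1) / t

theorem tendsto_exp_neg_mul_sub_one_div (x : ℝ) :
    Tendsto (fun t => (Real.exp (-t * x) - 1) / t) (𝓝[≠] 0) (𝓝 (-x)) := by
  have hder : HasDerivAt (fun t => Real.exp (-t * x)) (-x) 0 := by
    simpa using ((hasDerivAt_neg (0 : ℝ)).mul_const x).exp
  refine (hasDerivAt_iff_tendsto_slope.mp hder).congr fun t => ?_
  simp [slope_def_field]

theorem tendsto_expDiffQuotient (d : Matrix m n ℝ) :
    Tendsto (expDiffQuotient d) (𝓝[≠] 0) (𝓝 (-d)) :=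
  tendsto_pi_nhds.mpr fun j => tendsto_pi_nhds.mpr fun k =>
    tendsto_exp_neg_mul_sub_one_div (d j k)

theorem of_exp_neg_mul_eq {d : Matrix m n ℝ} {t : ℝ} (ht : t ≠ 0) :
    (of fun j k => Real.exp (-t * d j k)) =
      t • expDiffQuotient d t + vecMulVec (fun _ => 1) (fun _ => 1) := by
  ext j k
  simp [expDiffQuotient, vecMulVec_apply, mul_div_cancel₀ _ ht]

end ExpSlope

theorem stmt7 {n : ℕ} (d : Matrix (Fin n) (Fin n) ℝ) (hd : IsUnit d.det)
    (hsum : (fun _ => (1 : ℝ)) ⬝ᵥ (d⁻¹ *ᵥ fun _ => 1) ≠ 0) :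
    (∃ ε > 0, ∀ t : ℝ, 0 < t → t < ε →
        IsUnit (Matrix.of fun j k => Real.exp (-t * d j k)).det) ∧
      Tendsto (fun t : ℝ => (Matrix.of fun j k => Real.exp (-t * d j k))⁻¹ *ᵥ fun _ => 1)
        (nhdsWithin 0 (Set.Ioi 0))
        (nhds (((fun _ => (1 : ℝ)) ⬝ᵥ (d⁻¹ *ᵥ fun _ => 1))⁻¹ • (d⁻¹ *ᵥ fun _ => 1))) := by
  have hneg : (-d)⁻¹ = -d⁻¹ := inv_eq_left_inv <| by rw [neg_mul_neg, nonsing_inv_mul _ hd]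
  have hd' : IsUnit (-d).det := by
    rw [det_neg]
    exact ((isUnit_neg_one (α := ℝ)).pow _).mul hd
  have hsum' : (fun _ => (1 : ℝ)) ⬝ᵥ ((-d)⁻¹ *ᵥ fun _ => 1) ≠ 0 := by
    simpa [hneg, neg_mulVec] using hsum
  have hle : 𝓝[>] (0 : ℝ) ≤ 𝓝[≠] 0 := nhdsWithin_mono _ fun t ht => ne_of_gt ht
  have hE : ∀ᶠ t in 𝓝[>] (0 : ℝ), (of fun j k => Real.exp (-t * d j k)) =
      t • expDiffQuotient d t + vecMulVec (fun _ => 1) (fun _ => 1) :=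
    eventually_mem_nhdsWithin.mono fun t ht => of_exp_neg_mul_eq (ne_of_gt ht)
  constructor
  · have hU : ∀ᶠ t in 𝓝[>] (0 : ℝ), IsUnit (of fun j k => Real.exp (-t * d j k)).det := by
      filter_upwards [hE, hle (eventually_smul_add_vecMulVec (tendsto_expDiffQuotient d) hd' hsum')]
        with t hEt ht
      exact hEt ▸ ht.1
    obtain ⟨ε, hε, hball⟩ := (nhdsGT_basis (0 : ℝ)).eventually_iff.mp hU
    exact ⟨ε, hε, fun t ht0 htε => hball ⟨ht0, htε⟩⟩
  · have hlim := (tendsto_smul_add_vecMulVec_inv_mulVec (tendsto_expDiffQuotient d) hd'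
      hsum').mono_left hle
    rw [hneg, neg_mulVec, dotProduct_neg, inv_neg, neg_smul_neg] at hlim
    exact hlim.congr' (hE.mono fun t ht => by dsimp only; rw [ht])
end

section
/- Let Z be positive definite n×n with weighting w = Z⁻¹1, and let Z[ζ] be the positive definite bordered matrix as above with weighting w[ζ]. Then the last component of w[ζ] equals (1 − ζᵀw)/(1 − ζᵀZ⁻¹ζ). -/
/-!
Block elimination: for any `t`, the vector `(A⁻¹ (u - t b), t)` is mapped by the bordered matrix
`[[A, b], [rᵀ, d]]` to `(u, rᵀA⁻¹u + t s)`, where `s = d - rᵀA⁻¹b` is the Schur complement of `A`.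
Since `det [[A, b], [rᵀ, d]] = det A · s`, invertibility of the bordered matrix forces `s ≠ 0`, and
the last coordinate of the solution with right-hand side `(u, c)` is `(c - rᵀA⁻¹u) / s`.
For `Z[ζ]` positive definite, `Z` is positive definite as a principal submatrix.
-/

open Matrix

namespace Matrix

variable {m K : Type*} [Fintype m] [DecidableEq m] [Field K]
  (A : Matrix m m K) [Invertible A] (b r : m → K) (d : K)

theorem det_fromBlocks_replicateCol_replicateRow :
    (fromBlocks A (replicateCol Unit b) (replicateRow Unit r) (of fun _ _ => d)).det =
      A.det * (d - r ⬝ᵥ A⁻¹ *ᵥ b) := by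
  rw [det_fromBlocks₁₁, invOf_eq_nonsing_inv, Matrix.mul_assoc, ← replicateCol_mulVec,
    replicateRow_mul_replicateCol, det_unique (n := Unit)]
  rfl

theorem fromBlocks_replicateCol_replicateRow_mulVec_sumElim (u : m → K) (t : K) :
    fromBlocks A (replicateCol Unit b) (replicateRow Unit r) (of fun _ _ => d) *ᵥ
        Sum.elim (A⁻¹ *ᵥ (u - t • b)) (fun _ => t) =
      Sum.elim u (fun _ => r ⬝ᵥ A⁻¹ *ᵥ u + t * (d - r ⬝ᵥ A⁻¹ *ᵥ b)) := by
  have hb : replicateCol Unit b *ᵥ (fun _ => t) = t • b := by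
    ext; simp [mulVec, dotProduct, mul_comm]
  have hd : (of fun _ _ => d : Matrix Unit Unit K) *ᵥ (fun _ => t) = fun _ => d * t := by
    ext; simp [mulVec, dotProduct]
  rw [fromBlocks_mulVec, Sum.elim_comp_inl, Sum.elim_comp_inr, mulVec_mulVec,
    mul_inv_of_invertible, one_mulVec, replicateRow_mulVec_eq_const, hb, hd, sub_add_cancel]
  congr 1
  ext
  simp only [Pi.add_apply, Function.const_apply, mulVec_sub, mulVec_smul, dotProduct_sub,
    dotProduct_smul, smul_eq_mul]
  ring

theorem inv_fromBlocks_replicateCol_replicateRow_mulVec_inr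
    (hM : IsUnit (fromBlocks A (replicateCol Unit b) (replicateRow Unit r) (of fun _ _ => d)).det)
    (u : m → K) (c : K) :
    ((fromBlocks A (replicateCol Unit b) (replicateRow Unit r) (of fun _ _ => d))⁻¹ *ᵥ
        Sum.elim u (fun _ => c)) (Sum.inr ()) =
      (c - r ⬝ᵥ A⁻¹ *ᵥ u) / (d - r ⬝ᵥ A⁻¹ *ᵥ b) := by
  have hs : d - r ⬝ᵥ A⁻¹ *ᵥ b ≠ 0 := by
    rw [det_fromBlocks_replicateCol_replicateRow] at hM
    exact right_ne_zero_of_mul hM.ne_zero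
  have hsolve := fromBlocks_replicateCol_replicateRow_mulVec_sumElim A b r d u
    ((c - r ⬝ᵥ A⁻¹ *ᵥ u) / (d - r ⬝ᵥ A⁻¹ *ᵥ b))
  rw [div_mul_cancel₀ _ hs, add_sub_cancel] at hsolve
  rw [← hsolve, mulVec_mulVec, nonsing_inv_mul _ hM, one_mulVec]
  rfl

end Matrix

theorem stmt14_general {n : ℕ} (Z : Matrix (Fin n) (Fin n) ℝ) (ζ : Fin n → ℝ)
    (hB : (border Z ζ).PosDef) :
    ((border Z ζ)⁻¹ *ᵥ fun _ => 1) (Sum.inr ()) =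
      (1 - ζ ⬝ᵥ (Z⁻¹ *ᵥ fun _ => 1)) / (1 - ζ ⬝ᵥ (Z⁻¹ *ᵥ ζ)) := by
  have hZ : Z.PosDef := hB.submatrix Sum.inl_injective
  have := hZ.isUnit.invertible
  have hone : (fun _ => 1 : Fin n ⊕ Unit → ℝ) = Sum.elim (fun _ => 1) (fun _ => 1) :=
    (Sum.elim_const_const 1).symm
  rw [hone]
  exact inv_fromBlocks_replicateCol_replicateRow_mulVec_inr Z ζ ζ 1
    ((isUnit_iff_isUnit_det _).mp hB.isUnit) _ _

theorem stmt14 {n : ℕ} (Z : Matrix (Fin n) (Fin n) ℝ) (ζ : Fin n → ℝ)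
    (hZ : Z.PosDef) (hB : (border Z ζ).PosDef) :
    ((border Z ζ)⁻¹ *ᵥ fun _ => 1) (Sum.inr ()) =
      (1 - ζ ⬝ᵥ (Z⁻¹ *ᵥ fun _ => 1)) / (1 - ζ ⬝ᵥ (Z⁻¹ *ᵥ ζ)) :=
  stmt14_general Z ζ hB
end

section
/- Let d be an invertible symmetric n×n real matrix with ω = d⁻¹1 and 1ᵀω > 0. For t > 0 with t < 1ᵀω, define Z̃ = 11ᵀ − td (the first-order approximation of exp[−td]) and suppose Z̃ is invertible. For δ ∈ ℝⁿ let ζ̃ = 1 − tδ. Then 1 − ζ̃ᵀ(Z̃⁻¹1) = t(δᵀω − 1)/(1ᵀω − t). -/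
open Matrix

theorem stmt15 {n : ℕ} (d : Matrix (Fin n) (Fin n) ℝ)
    (hd : IsUnit d.det) (hsymm : d.IsSymm)
    (t : ℝ) (ht0 : 0 < t)
    (hω : 0 < (fun _ => (1 : ℝ)) ⬝ᵥ (d⁻¹ *ᵥ fun _ => 1))
    (htω : t < (fun _ => (1 : ℝ)) ⬝ᵥ (d⁻¹ *ᵥ fun _ => 1))
    (hZ : IsUnit (Matrix.vecMulVec (fun _ => (1 : ℝ)) (fun _ => 1) - t • d).det)
    (δ : Fin n → ℝ) :
    1 - (fun i => 1 - t * δ i) ⬝ᵥ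
        ((Matrix.vecMulVec (fun _ => (1 : ℝ)) (fun _ => 1) - t • d)⁻¹ *ᵥ fun _ => 1) =
      t * (δ ⬝ᵥ (d⁻¹ *ᵥ fun _ => 1) - 1) /
        ((fun _ => (1 : ℝ)) ⬝ᵥ (d⁻¹ *ᵥ fun _ => 1) - t) := by
  set one : Fin n → ℝ := fun _ => (1 : ℝ) with hone
  set ω : Fin n → ℝ := d⁻¹ *ᵥ one with hω'
  set s : ℝ := one ⬝ᵥ ω with hs
  set Z : Matrix (Fin n) (Fin n) ℝ := Matrix.vecMulVec one one - t • d with hZdef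
  have hst : s - t ≠ 0 := by
    have := htω
    linarith
  have hdω : d *ᵥ ω = one := by
    rw [hω', Matrix.mulVec_mulVec, Matrix.mul_nonsing_inv d hd, Matrix.one_mulVec]
  have hZω : Z *ᵥ ω = (s - t) • one := by
    rw [hZdef, Matrix.sub_mulVec, Matrix.smul_mulVec, hdω]
    funext i
    simp [Matrix.mulVec, dotProduct, Matrix.vecMulVec_apply, hs, hone, sub_mul]
  have hinv : Z⁻¹ *ᵥ one = (s - t)⁻¹ • ω := by
    have h1 : Z⁻¹ *ᵥ (Z *ᵥ ω) = ω := by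
      rw [Matrix.mulVec_mulVec, Matrix.nonsing_inv_mul Z hZ, Matrix.one_mulVec]
    rw [hZω, Matrix.mulVec_smul] at h1
    have := congrArg (fun v => (s - t)⁻¹ • v) h1
    simp only [smul_smul, inv_mul_cancel₀ hst, one_smul] at this
    rw [← this]
  rw [hinv]
  have hdot : (fun i => 1 - t * δ i) ⬝ᵥ ((s - t)⁻¹ • ω) =
      (s - t)⁻¹ * (s - t * (δ ⬝ᵥ ω)) := by
    simp only [dotProduct, Pi.smul_apply, smul_eq_mul, hs, Finset.mul_sum,
      ← Finset.sum_sub_distrib]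
    apply Finset.sum_congr rfl
    intro i _
    simp [hone]
    ring
  rw [hdot]
  field_simp
  ring
end

section
/- Let Z be the n×n 0-1 matrix with Z_{jj} = 1 for all j and exactly one additional nonzero entry Z_{j,I(j)} = 1 per row, where I: {1,…,n} → {1,…,n} satisfies I(j) ≠ j for all j. If the functional graph of I (directed edges j → I(j)) has no cycle of even length, then Z is invertible. -/
open Matrix

theorem stmt18 {n : ℕ} (I : Fin n → Fin n) (hI : ∀ j, I j ≠ j)
    (hcycles : ∀ (j : Fin n) (k : ℕ), 0 < k → I^[k] j = j →
      (∀ m, 0 < m → m < k → I^[m] j ≠ j) → ¬ Even k)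
    (Z : Matrix (Fin n) (Fin n) ℝ)
    (hZ : Z = Matrix.of fun i j => if j = i ∨ j = I i then (1 : ℝ) else 0) :
    IsUnit Z.det := by
  rw [isUnit_iff_ne_zero]
  intro hdet
  obtain ⟨v, hv, hZv⟩ := (Matrix.exists_mulVec_eq_zero_iff).mpr hdet
  -- key: v (I i) = - v i
  have key : ∀ i, v (I i) = - v i := by
    intro i
    have h := congrFun hZv i
    have hsum : (Z.mulVec v) i = v i + v (I i) := by
      rw [hZ]
      simp only [Matrix.mulVec, dotProduct, Matrix.of_apply]
      have heach : ∀ j, (if j = i ∨ j = I i then (1:ℝ) else 0) * v j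
          = (if j = i then v j else 0) + (if j = I i then v j else 0) := by
        intro j
        by_cases h1 : j = i <;> by_cases h2 : j = I i <;>
          simp [h1, h2] <;>
          (intro h; first | exact absurd h (hI i) | exact absurd h.symm (hI i))
      simp only [heach, Finset.sum_add_distrib, Finset.sum_ite_eq',
        Finset.mem_univ, if_true]
    rw [hZv] at hsum
    simp only [Pi.zero_apply] at hsum
    linarith [hsum.symm]
  have iter : ∀ (k : ℕ) (j : Fin n), v (I^[k] j) = (-1) ^ k * v j := by
    intro k
    induction k with
    | zero => simp
    | succ k ih =>
      intro j
      rw [Function.iterate_succ_apply', key, ih, pow_succ]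
      ring
  -- every point maps to 0
  have hv0 : ∀ j, v j = 0 := by
    intro j
    obtain ⟨a, b, hab, heq⟩ := Finite.exists_ne_map_eq_of_infinite
      (fun k : ℕ => I^[k] j)
    wlog hlt : a < b generalizing a b
    · exact this b a hab.symm heq.symm (by omega)
    set x := I^[a] j with hx
    have hper : I^[b - a] x = x := by
      rw [hx, ← Function.iterate_add_apply]
      have : b - a + a = b := by omega
      rw [this]
      exact heq.symm
    have hpos : 0 < b - a := by omega
    -- minimal period
    have hP : ∃ m, 0 < m ∧ I^[m] x = x := ⟨b - a, hpos, hper⟩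
    classical
    set d := Nat.find hP with hd
    obtain ⟨hdpos, hdper⟩ := Nat.find_spec hP
    have hmin : ∀ m, 0 < m → m < d → I^[m] x ≠ x := by
      intro m hm hmd hmx
      exact Nat.find_min hP hmd ⟨hm, hmx⟩
    have hodd : ¬ Even d := hcycles x d hdpos hdper hmin
    have hvx : v x = 0 := by
      have := iter d x
      rw [hdper, (Nat.not_even_iff_odd.mp hodd).neg_one_pow] at this
      linarith
    have := iter a j
    rw [← hx, hvx] at this
    rcases mul_eq_zero.mp this.symm with h | h
    · exact absurd h (pow_ne_zero _ (by norm_num))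
    · exact h
  exact hv (funext hv0)
end
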